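/- For every integer m ≥ 0, 4 ∫_0^1 x^(2+2m)/(1+x^2)^2 dx = 2(2m+1)·|π/4 − ∑_{n=0}^{m−1} (−1)^n/(2n+1)| − 1. -/

import Mathlib

/-!
Write `J m = leibnizRemainder m = ∫₀¹ x^(2m)/(1+x²) dx`. Differentiating `x^(2m+1)/(1+x²)` and integrating over `[0,1]`
gives `4 ∫₀¹ x^(2m+2)/(1+x²)² dx = 2(2m+1) J m - 1`. Since `x^(2m+2) = x^(2m)(1+x²) - x^(2m)`, we have
`J (m+1) = 1/(2m+1) - J m`, and `J 0 = arctan 1 = π/4`; hence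
`π/4 - ∑_{n<m} (-1)^n/(2n+1) = (-1)^m J m`, whose absolute value is `J m ≥ 0`.
-/

open intervalIntegral Real

lemma intervalIntegrable_pow_div_one_add_sq_pow (p k : ℕ) (a b : ℝ) :
    IntervalIntegrable (fun x : ℝ => x ^ p / (1 + x ^ 2) ^ k) MeasureTheory.volume a b :=
  ((continuous_pow p).div (by fun_prop) fun x => by positivity).intervalIntegrable a b

lemma hasDerivAt_pow_succ_div_one_add_sq (n : ℕ) (x : ℝ) :
    HasDerivAt (fun x : ℝ => x ^ (n + 1) / (1 + x ^ 2))
      ((n + 1) * (x ^ n / (1 + x ^ 2)) - 2 * (x ^ (n + 2) / (1 + x ^ 2) ^ 2)) x := by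
  have hnum : HasDerivAt (fun x : ℝ => x ^ (n + 1)) ((n + 1 : ℕ) * x ^ n) x := by
    simpa using hasDerivAt_pow (n + 1) x
  refine (hnum.div ((hasDerivAt_pow 2 x).const_add 1) (by positivity)).congr_deriv ?_
  field_simp
  push_cast
  ring

noncomputable def leibnizRemainder (m : ℕ) : ℝ := ∫ x in (0:ℝ)..1, x ^ (2 * m) / (1 + x ^ 2)

lemma four_mul_integral_pow_div_one_add_sq_sq (m : ℕ) :
    4 * ∫ x in (0:ℝ)..1, x ^ (2 + 2 * m) / (1 + x ^ 2) ^ 2 =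
      2 * (2 * m + 1) * leibnizRemainder m - 1 := by
  have hJ : IntervalIntegrable (fun x : ℝ => x ^ (2 * m) / (1 + x ^ 2)) MeasureTheory.volume 0 1 := by
    simpa using intervalIntegrable_pow_div_one_add_sq_pow (2 * m) 1 0 1
  have hI := intervalIntegrable_pow_div_one_add_sq_pow (2 * m + 2) 2 0 1
  have hFTC := integral_eq_sub_of_hasDerivAt
    (fun x _ => hasDerivAt_pow_succ_div_one_add_sq (2 * m) x)
    ((hJ.const_mul _).sub (hI.const_mul _))
  rw [integral_sub (hJ.const_mul _) (hI.const_mul _), integral_const_mul,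
    integral_const_mul] at hFTC
  rw [leibnizRemainder, add_comm 2]
  norm_num at hFTC
  linarith

lemma leibnizRemainder_zero : leibnizRemainder 0 = π / 4 := by
  simp [leibnizRemainder, arctan_one]

lemma leibnizRemainder_succ (m : ℕ) :
    leibnizRemainder (m + 1) = 1 / (2 * m + 1) - leibnizRemainder m := by
  have hsplit : ∀ x ∈ Set.uIcc (0:ℝ) 1,
      x ^ (2 * (m + 1)) / (1 + x ^ 2) = x ^ (2 * m) - x ^ (2 * m) / (1 + x ^ 2) := by
    intro x _
    field_simp
    ring
  rw [leibnizRemainder, leibnizRemainder, integral_congr hsplit,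
    integral_sub ((continuous_pow _).intervalIntegrable _ _)
      (by simpa using intervalIntegrable_pow_div_one_add_sq_pow (2 * m) 1 0 1),
    integral_pow]
  push_cast
  ring_nf

lemma leibnizRemainder_nonneg (m : ℕ) : 0 ≤ leibnizRemainder m :=
  integral_nonneg zero_le_one fun x hx => by have := hx.1; positivity

lemma pi_div_four_sub_sum_range (m : ℕ) :
    π / 4 - ∑ n ∈ Finset.range m, (-1:ℝ) ^ n / (2 * n + 1) = (-1) ^ m * leibnizRemainder m := by
  induction m with
  | zero => simp [leibnizRemainder_zero]
  | succ k ih =>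
    rw [Finset.sum_range_succ, leibnizRemainder_succ, pow_succ, sub_add_eq_sub_sub, ih]
    ring

theorem stmt_3 (m : ℕ) :
    4 * ∫ x in (0:ℝ)..1, x^(2 + 2*m) / (1 + x^2)^2 =
      2 * (2*m + 1) * |Real.pi/4 - ∑ n ∈ Finset.range m, (-1:ℝ)^n / (2*n + 1)| - 1 := by
  rw [pi_div_four_sub_sum_range, abs_mul, abs_pow, abs_neg, abs_one, one_pow, one_mul,
    abs_of_nonneg (leibnizRemainder_nonneg m)]
  exact four_mul_integral_pow_div_one_add_sq_sq m
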